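/- For every s > 0, 1/(s + K_{n=1}^∞ (n²/s)) = 2·∫_0^1 x^s/(1+x²) dx, where s + K_{n=1}^∞ (n²/s) denotes the limit of the convergents of the generalized continued fraction with integer part s, partial numerators a_n = n² and partial denominators b_n = s. -/

import Mathlib

open Filter Real

/-- Numerators of the convergents of a generalized continued fraction with
integer part `b₀`, partial numerators `a n` and partial denominators `b n` (for `n ≥ 1`). -/
noncomputable def cfNum (b₀ : ℝ) (a b : ℕ → ℝ) : ℕ → ℝ
  | 0 => b₀
  | 1 => b 1 * b₀ + a 1
  | n + 2 => b (n + 2) * cfNum b₀ a b (n + 1) + a (n + 2) * cfNum b₀ a b n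

/-- Denominators of the convergents of a generalized continued fraction. -/
noncomputable def cfDen (a b : ℕ → ℝ) : ℕ → ℝ
  | 0 => 1
  | 1 => b 1
  | n + 2 => b (n + 2) * cfDen a b (n + 1) + a (n + 2) * cfDen a b n

/-- `IsCFLimit b₀ a b L` means: the convergents of the generalized continued fraction
`b₀ + a 1 / (b 1 + a 2 / (b 2 + ⋯))` tend to `L`. -/
def IsCFLimit (b₀ : ℝ) (a b : ℕ → ℝ) (L : ℝ) : Prop :=
  Filter.Tendsto (fun n => cfNum b₀ a b n / cfDen a b n) Filter.atTop (nhds L)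

/-!
Put `I m = ∫₀¹ 2 x^s (1 - x²)^m / (1 + x²)^(m+1) dx`. Integrating the derivative of
`2 x^(s+1) (1 - x²)^m / (1 + x²)^(m+1)` over `[0, 1]` gives
`s I m + (m + 1) I (m + 1) = m I (m - 1) + [m = 0]`. Hence `R n = (-1)^(n+1) (n+1)! I (n+1)`
satisfies the three-term recurrence `R (n+2) = s R (n+1) + (n+2)² R n` of the numerators `P n`
and denominators `Q n` of the convergents, and comparing initial values gives
`I 0 P n - Q n = R n`. As `I m > 0`, the errors `I 0 P n / Q n - 1 = R n / Q n` alternate in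
sign; they converge to `I 0 L - 1`, whose square is then a limit of nonpositive numbers, so
`I 0 L = 1`.
-/

open Topology

theorem eq_zero_of_tendsto_of_mul_succ_nonpos {y : ℕ → ℝ} {ℓ : ℝ}
    (hy : Tendsto y atTop (𝓝 ℓ)) (halt : ∀ n, y n * y (n + 1) ≤ 0) : ℓ = 0 := by
  have hprod : Tendsto (fun n => y n * y (n + 1)) atTop (𝓝 (ℓ * ℓ)) :=
    hy.mul (hy.comp (tendsto_add_atTop_nat 1))
  exact mul_self_eq_zero.mp (le_antisymm (le_of_tendsto' hprod halt) (mul_self_nonneg ℓ))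

theorem cfDen_pos {a b : ℕ → ℝ} (ha : ∀ n, 0 ≤ a n) (hb : ∀ n, 0 < b n) (n : ℕ) :
    0 < cfDen a b n := by
  induction n using Nat.twoStepInduction with
  | zero => exact one_pos
  | one => exact hb 1
  | more n ih₀ ih₁ =>
    rw [cfDen]
    have := ha (n + 2)
    have := hb (n + 2)
    positivity

namespace EulerCF

variable {s : ℝ}

noncomputable def integrand (s : ℝ) (m : ℕ) (x : ℝ) : ℝ :=
  2 * x ^ s * (1 - x ^ 2) ^ m / (1 + x ^ 2) ^ (m + 1)

noncomputable def primitive (s : ℝ) (m : ℕ) (x : ℝ) : ℝ :=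
  2 * x ^ (s + 1) * (1 - x ^ 2) ^ m / (1 + x ^ 2) ^ (m + 1)

noncomputable def integral (s : ℝ) (m : ℕ) : ℝ :=
  ∫ x in (0 : ℝ)..1, integrand s m x

theorem continuous_integrand (hs : 0 ≤ s) (m : ℕ) : Continuous (integrand s m) := by
  have := Real.continuous_rpow_const hs
  unfold integrand
  exact Continuous.div (by fun_prop) (by fun_prop) fun x => by positivity

theorem integral_pos (hs : 0 ≤ s) (m : ℕ) : 0 < integral s m := by
  refine intervalIntegral.intervalIntegral_pos_of_pos_on
    ((continuous_integrand hs m).intervalIntegrable 0 1) (fun x ⟨hx₀, hx₁⟩ => ?_) one_pos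
  have : 0 < x ^ s := Real.rpow_pos_of_pos hx₀ s
  have : 0 < 1 - x ^ 2 := by nlinarith
  unfold integrand
  positivity

theorem integral_zero (s : ℝ) :
    integral s 0 = 2 * ∫ x in (0 : ℝ)..1, x ^ s / (1 + x ^ 2) := by
  rw [integral, ← intervalIntegral.integral_const_mul]
  congr 1 with x
  simp [integrand, mul_div_assoc]

theorem hasDerivAt_primitive (hs : 0 ≤ s) (m : ℕ) {x : ℝ} (hx : 0 ≤ x) :
    HasDerivAt (primitive s m)
      (s * integrand s m x + (m + 1) * integrand s (m + 1) x - m * integrand s (m - 1) x) x := by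
  have hpow : HasDerivAt (fun y : ℝ => y ^ (s + 1)) ((s + 1) * x ^ s) x := by
    simpa using Real.hasDerivAt_rpow_const (x := x) (p := s + 1) (Or.inr (by linarith))
  have hnum :
      HasDerivAt (fun y : ℝ => (1 - y ^ 2) ^ m) (m * (1 - x ^ 2) ^ (m - 1) * -(2 * x)) x :=
    ((hasDerivAt_pow 2 x).const_sub 1).pow m |>.congr_deriv (by simp)
  have hden :
      HasDerivAt (fun y : ℝ => (1 + y ^ 2) ^ (m + 1)) ((m + 1) * (1 + x ^ 2) ^ m * (2 * x)) x :=
    ((hasDerivAt_pow 2 x).const_add 1).pow (m + 1) |>.congr_deriv (by simp)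
  refine ((hpow.const_mul 2).mul hnum).div hden (by positivity) |>.congr_deriv ?_
  simp only [Pi.mul_apply, integrand, Real.rpow_add_one' hx (by linarith : s + 1 ≠ 0)]
  have : (1 : ℝ) + x ^ 2 ≠ 0 := by positivity
  cases m with
  | zero => field_simp; ring
  | succ k => simp only [Nat.add_sub_cancel]; push_cast; field_simp; ring

theorem primitive_one_sub_primitive_zero (hs : 0 ≤ s) (m : ℕ) :
    primitive s m 1 - primitive s m 0 = 0 ^ m := by
  have : (0 : ℝ) ^ (s + 1) = 0 := Real.zero_rpow (by linarith)
  cases m <;> norm_num [primitive, this]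

-- At `m = 0` the truncated `m - 1` is harmless: its coefficient vanishes.
theorem integral_recurrence (hs : 0 ≤ s) (m : ℕ) :
    s * integral s m + (m + 1) * integral s (m + 1) = m * integral s (m - 1) + 0 ^ m := by
  have hint (k : ℕ) : IntervalIntegrable (integrand s k) MeasureTheory.volume 0 1 :=
    (continuous_integrand hs k).intervalIntegrable 0 1
  have hftc := intervalIntegral.integral_eq_sub_of_hasDerivAt
    (fun x hx => hasDerivAt_primitive hs m (x := x) (by simp_all [Set.uIcc_of_le]))
    ((((hint m).const_mul s).add ((hint (m + 1)).const_mul _)).sub ((hint (m - 1)).const_mul _))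
  rw [intervalIntegral.integral_sub (((hint m).const_mul s).add ((hint (m + 1)).const_mul _))
      ((hint (m - 1)).const_mul _),
    intervalIntegral.integral_add ((hint m).const_mul s) ((hint (m + 1)).const_mul _),
    intervalIntegral.integral_const_mul, intervalIntegral.integral_const_mul,
    intervalIntegral.integral_const_mul, primitive_one_sub_primitive_zero hs] at hftc
  simp only [integral]
  linarith

noncomputable def remainder (s : ℝ) (n : ℕ) : ℝ :=
  (-1) ^ (n + 1) * (n + 1).factorial * integral s (n + 1)

theorem remainder_add_two (hs : 0 ≤ s) (n : ℕ) :
    remainder s (n + 2) = s * remainder s (n + 1) + ((n + 2 : ℕ) : ℝ) ^ 2 * remainder s n := by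
  have hrec := integral_recurrence hs (n + 2)
  simp only [remainder, Nat.factorial_succ (n + 2), Nat.factorial_succ (n + 1)] at hrec ⊢
  push_cast at hrec ⊢
  linear_combination (-1) ^ (n + 1) * (n + 2) * (n + 1).factorial * hrec

theorem remainder_mul_remainder_succ_nonpos (hs : 0 ≤ s) (n : ℕ) :
    remainder s n * remainder s (n + 1) ≤ 0 := by
  have hsign : (-1 : ℝ) ^ (n + 1) * (-1) ^ (n + 2) = -1 := by
    rw [← pow_add]
    exact Odd.neg_one_pow ⟨n + 1, by ring⟩
  have := integral_pos hs (n + 1)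
  have := integral_pos hs (n + 2)
  have hprod : remainder s n * remainder s (n + 1) =
      -((n + 1).factorial * integral s (n + 1) * ((n + 2).factorial * integral s (n + 2))) := by
    simp only [remainder]
    linear_combination ((n + 1).factorial * integral s (n + 1) *
      ((n + 2).factorial * integral s (n + 2))) * hsign
  rw [hprod, neg_nonpos]
  positivity

theorem integral_zero_mul_cfNum_sub_cfDen (hs : 0 ≤ s) (n : ℕ) :
    integral s 0 * cfNum s (fun n => (n : ℝ) ^ 2) (fun _ => s) n
      - cfDen (fun n => (n : ℝ) ^ 2) (fun _ => s) n = remainder s n := by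
  have hrec₀ := integral_recurrence hs 0
  have hrec₁ := integral_recurrence hs 1
  induction n using Nat.twoStepInduction with
  | zero =>
    simp only [cfNum, cfDen, remainder]
    norm_num at hrec₀ ⊢
    linarith
  | one =>
    simp only [cfNum, cfDen, remainder]
    norm_num at hrec₀ hrec₁ ⊢
    linear_combination s * hrec₀ - hrec₁
  | more n ih₀ ih₁ =>
    rw [cfNum, cfDen, remainder_add_two hs]
    linear_combination s * ih₁ + ((n + 2 : ℕ) : ℝ) ^ 2 * ih₀

end EulerCF

open EulerCF in
theorem euler_integral_formula (s : ℝ) (hs : 0 < s) (L : ℝ)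
    (hL : IsCFLimit s (fun n => (n : ℝ) ^ 2) (fun _ => s) L) :
    1 / L = 2 * ∫ x in (0 : ℝ)..1, x ^ s / (1 + x ^ 2) := by
  set P := cfNum s (fun n => (n : ℝ) ^ 2) (fun _ => s)
  set Q := cfDen (fun n => (n : ℝ) ^ 2) (fun _ => s)
  have hQ : ∀ n, 0 < Q n := cfDen_pos (fun n => by positivity) (fun _ => hs)
  have herr : ∀ n, integral s 0 * (P n / Q n) - 1 = remainder s n / Q n := fun n => by
    rw [← integral_zero_mul_cfNum_sub_cfDen hs.le n, sub_div, mul_div_assoc,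
      div_self (hQ n).ne']
  have hlim : integral s 0 * L - 1 = 0 := by
    refine eq_zero_of_tendsto_of_mul_succ_nonpos ((hL.const_mul _).sub_const 1) fun n => ?_
    rw [herr, herr, div_mul_div_comm]
    exact div_nonpos_of_nonpos_of_nonneg (remainder_mul_remainder_succ_nonpos hs.le n)
      (mul_pos (hQ n) (hQ (n + 1))).le
  rw [← integral_zero, one_div]
  exact (eq_inv_of_mul_eq_one_left (sub_eq_zero.mp hlim)).symm
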